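/- arXiv:2105.00298 — 3 statements merged into one kernel-verified Lean document; each statement's English description precedes it below -/
import Mathlib

section
/- Let p be a prime number and let s ∈ ℂ with Re(s) > -1. Then ∫_{ℤ_p^×} |1 - x|_p^s dμ(x) = p^{-1-s}·(1 - p^{-1})/(1 - p^{-1-s}) + p^{-1}(p - 2). -/
/-!
The substitution `y = 1 - x` carries `ℤ_p^×` onto `{‖1 - y‖ = 1} = ℤ_p \ (1 + pℤ_p)`. On
`1 + pℤ_p` the integrand is `1`, so that part contributes `μ (1 + pℤ_p) = p⁻¹`. On `ℤ_p` the
integrand is radial: `ℤ_p` is the disjoint union of the `p ^ n` translates of `p ^ n ℤ_p`, so the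
ball of radius `p ^ (-n)` has measure `p ^ (-n)` and the sphere of that radius has measure
`(1 - p⁻¹) p ^ (-n)`. Summing over the spheres gives the geometric series
`(1 - p⁻¹) ∑ p ^ (-n (1 + s)) = (1 - p⁻¹) / (1 - p ^ (-1 - s))`, convergent for `-1 < re s`.
-/

open MeasureTheory Complex Metric
open scoped ENNReal

lemma Complex.ofReal_zpow_neg_cpow {x : ℝ} (hx : 0 < x) (n : ℕ) (z : ℂ) :
    ((x ^ (-n : ℤ) : ℝ) : ℂ) ^ z = ((x : ℂ) ^ (-z)) ^ n := by
  have hxn : 0 < x ^ (-n : ℤ) := zpow_pos hx _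
  rw [cpow_def_of_ne_zero (by exact_mod_cast hxn.ne'),
    cpow_def_of_ne_zero (by exact_mod_cast hx.ne'), ← exp_nat_mul, ← ofReal_log hxn.le, Real.log_zpow, ← ofReal_log hx.le]
  push_cast
  ring_nf

section NormedGroup

variable {F E : Type*} [NormedAddCommGroup F] [MeasurableSpace F] [NormedAddCommGroup E]

lemma setIntegral_sphere_comp_norm [OpensMeasurableSpace F] [NormedSpace ℝ E] [CompleteSpace E]
    (μ : Measure F) (g : ℝ → E) (r : ℝ) :
    ∫ y in sphere (0 : F) r, g ‖y‖ ∂μ = μ.real (sphere 0 r) • g r := by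
  rw [setIntegral_congr_fun isClosed_sphere.measurableSet fun y hy ↦ congrArg g
    (mem_sphere_zero_iff_norm.1 hy), setIntegral_const]

lemma integrableOn_sphere_comp_norm [OpensMeasurableSpace F] [ProperSpace F] (μ : Measure F)
    [IsFiniteMeasureOnCompacts μ] (g : ℝ → E) (r : ℝ) :
    IntegrableOn (fun y ↦ g ‖y‖) (sphere (0 : F) r) μ :=
  (integrableOn_const (isCompact_sphere 0 r).measure_lt_top.ne).congr_fun
    (fun y hy ↦ congrArg g (mem_sphere_zero_iff_norm.1 hy).symm) isClosed_sphere.measurableSet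

lemma setIntegral_sphere_zero_sub_left [BorelSpace F] [NormedSpace ℝ E] (μ : Measure F)
    [μ.IsAddLeftInvariant] [μ.IsNegInvariant] (f : F → E) (c : F) (r : ℝ) :
    ∫ x in sphere 0 r, f (c - x) ∂μ = ∫ y in sphere c r, f y ∂μ := by
  have hpre : (c - ·) ⁻¹' sphere c r = sphere 0 r := by
    ext x
    simp
  rw [← hpre, (Measure.measurePreserving_sub_left μ c).setIntegral_preimage_emb
    (Homeomorph.subLeft c).measurableEmbedding]

end NormedGroup

namespace Padic

variable {p : ℕ} [hp : Fact p.Prime]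

lemma ball_zpow_eq_closedBall (c : ℚ_[p]) (n : ℤ) :
    ball c ((p : ℝ) ^ n) = closedBall c ((p : ℝ) ^ (n - 1)) := by
  ext x
  rw [mem_ball, mem_closedBall, dist_eq_norm, norm_le_pow_iff_norm_lt_pow_add_one, sub_add_cancel]

lemma sphere_zpow_eq_closedBall_sdiff (c : ℚ_[p]) (n : ℤ) :
    sphere c ((p : ℝ) ^ n) = closedBall c ((p : ℝ) ^ n) \ closedBall c ((p : ℝ) ^ (n - 1)) := by
  rw [← ball_zpow_eq_closedBall, closedBall_sdiff_ball]

lemma closedBall_zero_one_eq_biUnion (n : ℕ) :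
    closedBall (0 : ℚ_[p]) 1 =
      ⋃ a ∈ Finset.range (p ^ n), closedBall (a : ℚ_[p]) ((p : ℝ) ^ (-n : ℤ)) := by
  ext x
  simp only [mem_closedBall, dist_eq_norm, sub_zero, Set.mem_iUnion, Finset.mem_range, exists_prop]
  constructor
  · intro hx
    let z : ℤ_[p] := ⟨x, hx⟩
    refine ⟨z.appr n, z.appr_lt n, ?_⟩
    have := (PadicInt.norm_le_pow_iff_mem_span_pow (z - (z.appr n : ℤ_[p])) n).2
      (by simpa using z.appr_spec n)
    rwa [PadicInt.norm_def, PadicInt.coe_sub, PadicInt.coe_natCast] at this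
  · rintro ⟨a, -, ha⟩
    calc ‖x‖ = ‖(x - a) + a‖ := by rw [sub_add_cancel]
      _ ≤ max ‖x - a‖ ‖(a : ℚ_[p])‖ := nonarchimedean _ _
      _ ≤ 1 := max_le (ha.trans (zpow_le_one_of_nonpos₀ (by exact_mod_cast hp.out.one_le)
          (by omega))) (by exact_mod_cast norm_int_le_one a)

lemma pairwiseDisjoint_closedBall_natCast (n : ℕ) :
    (Finset.range (p ^ n) : Set ℕ).PairwiseDisjoint
      fun a ↦ closedBall (a : ℚ_[p]) ((p : ℝ) ^ (-n : ℤ)) := by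
  intro a ha b hb hab
  refine Set.disjoint_left.2 fun x hxa hxb ↦ hab ?_
  have hdist : ‖(((b : ℤ) - a : ℤ) : ℚ_[p])‖ ≤ (p : ℝ) ^ (-n : ℤ) := by
    push_cast
    rw [← dist_eq_norm]
    exact (IsUltrametricDist.dist_triangle_max _ x _).trans (max_le (by rwa [dist_comm]) hxa)
  rw [norm_int_le_pow_iff_dvd] at hdist
  refine Nat.ModEq.eq_of_lt_of_lt (Nat.modEq_iff_dvd.2 ?_) (Finset.mem_range.1 ha)
    (Finset.mem_range.1 hb)
  exact_mod_cast hdist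

lemma closedBall_zero_one_sdiff_singleton :
    closedBall (0 : ℚ_[p]) 1 \ {0} = ⋃ n : ℕ, sphere 0 ((p : ℝ) ^ (-n : ℤ)) := by
  ext x
  simp only [Set.mem_sdiff, mem_closedBall_zero_iff, Set.mem_singleton_iff, Set.mem_iUnion,
    mem_sphere_zero_iff_norm]
  constructor
  · rintro ⟨hx, hx0⟩
    refine ⟨x.valuation.toNat, ?_⟩
    rw [norm_eq_zpow_neg_valuation hx0, Int.toNat_of_nonneg ((norm_le_one_iff_val_nonneg x).1 hx)]
  · rintro ⟨n, hn⟩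
    refine ⟨hn ▸ zpow_le_one_of_nonpos₀ (by exact_mod_cast hp.out.one_le) (by omega), ?_⟩
    rintro rfl
    exact (zpow_pos (by exact_mod_cast hp.out.pos : (0 : ℝ) < p) _).ne' (hn.symm.trans norm_zero)

lemma pairwise_disjoint_sphere_zpow :
    Pairwise (Function.onFun Disjoint fun n : ℕ ↦ sphere (0 : ℚ_[p]) ((p : ℝ) ^ (-n : ℤ))) := by
  intro m n hmn
  refine Set.disjoint_left.2 fun x hm hn ↦ hmn ?_
  rw [mem_sphere_zero_iff_norm] at hm hn
  have := zpow_right_injective₀ (by exact_mod_cast hp.out.pos) (by exact_mod_cast hp.out.ne_one)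
    (hm.symm.trans hn)
  omega

lemma closedBall_one_zpow_subset_sphere :
    closedBall (1 : ℚ_[p]) ((p : ℝ) ^ (-1 : ℤ)) ⊆ sphere 0 1 := by
  intro y hy
  rw [mem_closedBall, dist_eq_norm] at hy
  have hlt : ‖y - 1‖ < ‖(1 : ℚ_[p])‖ := by
    rw [norm_one]
    exact hy.trans_lt (zpow_lt_one_of_neg₀ (by exact_mod_cast hp.out.one_lt) (by norm_num))
  rw [mem_sphere_zero_iff_norm, ← sub_add_cancel y 1,
    IsUltrametricDist.norm_add_eq_max_of_norm_ne_norm hlt.ne, max_eq_right hlt.le, norm_one]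

lemma sphere_one_one_eq_closedBall_sdiff :
    sphere (1 : ℚ_[p]) 1 = closedBall 0 1 \ closedBall 1 ((p : ℝ) ^ (-1 : ℤ)) := by
  have h := sphere_zpow_eq_closedBall_sdiff (p := p) 1 0
  rw [zpow_zero, zero_sub] at h
  rw [h, IsUltrametricDist.closedBall_eq_of_mem (x := (0 : ℚ_[p])) (y := 1) (by simp)]

lemma zpow_neg_smul_cpow (n : ℕ) (s : ℂ) :
    (p : ℝ) ^ (-n : ℤ) • (((p : ℝ) ^ (-n : ℤ) : ℝ) : ℂ) ^ s = ((p : ℂ) ^ (-1 - s)) ^ n := by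
  have hp0 : (0 : ℝ) < p := by exact_mod_cast hp.out.pos
  have ht : (((p : ℝ) ^ (-n : ℤ) : ℝ) : ℂ) ≠ 0 := by exact_mod_cast (zpow_pos hp0 _).ne'
  calc _ = (((p : ℝ) ^ (-n : ℤ) : ℝ) : ℂ) ^ (1 + s) := by
        rw [real_smul, cpow_add _ _ ht, cpow_one]
    _ = _ := by rw [ofReal_zpow_neg_cpow hp0, ofReal_natCast, neg_add']

lemma norm_natCast_cpow_neg_one_sub_lt_one {s : ℂ} (hs : -1 < s.re) :
    ‖(p : ℂ) ^ (-1 - s)‖ < 1 := by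
  rw [norm_natCast_cpow_of_pos hp.out.pos]
  exact Real.rpow_lt_one_of_one_lt_of_neg (by exact_mod_cast hp.out.one_lt)
    (by simp only [sub_re, neg_re, one_re]; linarith)

lemma summable_zpow_neg_mul_norm_cpow {s : ℂ} (hs : -1 < s.re) :
    Summable fun n : ℕ ↦ (p : ℝ) ^ (-n : ℤ) * ‖(((p : ℝ) ^ (-n : ℤ) : ℝ) : ℂ) ^ s‖ := by
  have hterm (n : ℕ) : (p : ℝ) ^ (-n : ℤ) * ‖(((p : ℝ) ^ (-n : ℤ) : ℝ) : ℂ) ^ s‖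
      = ‖(p : ℂ) ^ (-1 - s)‖ ^ n := by
    rw [← norm_pow, ← zpow_neg_smul_cpow, norm_smul, Real.norm_of_nonneg (by positivity)]
  simp_rw [hterm]
  exact summable_geometric_of_lt_one (norm_nonneg _) (norm_natCast_cpow_neg_one_sub_lt_one hs)

variable [MeasurableSpace ℚ_[p]] [BorelSpace ℚ_[p]] {μ : Measure ℚ_[p]} [μ.IsAddHaarMeasure]

theorem addHaar_closedBall_zpow (hμ : μ (closedBall 0 1) = 1) (c : ℚ_[p]) (n : ℕ) :
    μ (closedBall c ((p : ℝ) ^ (-n : ℤ))) = (p : ℝ≥0∞)⁻¹ ^ n := by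
  have hcover : μ (closedBall 0 ((p : ℝ) ^ (-n : ℤ))) * (p : ℝ≥0∞) ^ n = 1 := by
    rw [← hμ, closedBall_zero_one_eq_biUnion n, measure_biUnion_finset
      (pairwiseDisjoint_closedBall_natCast n) fun _ _ ↦ measurableSet_closedBall]
    simp [Measure.addHaar_closedBall_center μ, mul_comm]
  rw [Measure.addHaar_closedBall_center, ← ENNReal.inv_pow]
  exact ENNReal.eq_inv_of_mul_eq_one_left hcover

theorem addHaar_real_closedBall_zpow (hμ : μ (closedBall 0 1) = 1) (c : ℚ_[p]) (n : ℕ) :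
    μ.real (closedBall c ((p : ℝ) ^ (-n : ℤ))) = (p : ℝ) ^ (-n : ℤ) := by
  rw [measureReal_def, addHaar_closedBall_zpow hμ]
  simp

theorem addHaar_real_sphere_zpow (hμ : μ (closedBall 0 1) = 1) (c : ℚ_[p]) (n : ℕ) :
    μ.real (sphere c ((p : ℝ) ^ (-n : ℤ))) = (1 - (p : ℝ)⁻¹) * (p : ℝ) ^ (-n : ℤ) := by
  have hsucc : (-n : ℤ) - 1 = -(n + 1 : ℕ) := by push_cast; ring
  rw [sphere_zpow_eq_closedBall_sdiff, measureReal_sdiff (closedBall_subset_closedBall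
      (zpow_le_zpow_right₀ (by exact_mod_cast hp.out.one_le) (by omega))) measurableSet_closedBall
      measure_closedBall_lt_top.ne,
    hsucc, addHaar_real_closedBall_zpow hμ, addHaar_real_closedBall_zpow hμ]
  simp only [zpow_neg, zpow_natCast, pow_succ]
  ring

lemma closedBall_zero_one_ae_eq_iUnion_sphere :
    closedBall (0 : ℚ_[p]) 1 =ᵐ[μ] ⋃ n : ℕ, sphere 0 ((p : ℝ) ^ (-n : ℤ)) := by
  rw [← closedBall_zero_one_sdiff_singleton]
  exact (sdiff_null_ae_eq_self (measure_singleton 0)).symm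

section Radial

variable {E : Type*} [NormedAddCommGroup E]

theorem integrableOn_closedBall_comp_norm (hμ : μ (closedBall 0 1) = 1) {g : ℝ → E}
    (hg : Summable fun n : ℕ ↦ (p : ℝ) ^ (-n : ℤ) * ‖g ((p : ℝ) ^ (-n : ℤ))‖) :
    IntegrableOn (fun y ↦ g ‖y‖) (closedBall 0 1) μ := by
  rw [integrableOn_congr_set_ae closedBall_zero_one_ae_eq_iUnion_sphere]
  refine integrableOn_iUnion_of_summable_integral_norm
    (fun _ ↦ integrableOn_sphere_comp_norm μ _ _) ?_
  simp_rw [setIntegral_sphere_comp_norm μ (fun r ↦ ‖g r‖), addHaar_real_sphere_zpow hμ,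
    smul_eq_mul, mul_assoc]
  exact hg.mul_left _

theorem hasSum_setIntegral_closedBall_comp_norm [NormedSpace ℝ E] [CompleteSpace E]
    (hμ : μ (closedBall 0 1) = 1) {g : ℝ → E}
    (hg : Summable fun n : ℕ ↦ (p : ℝ) ^ (-n : ℤ) * ‖g ((p : ℝ) ^ (-n : ℤ))‖) :
    HasSum (fun n : ℕ ↦ ((1 - (p : ℝ)⁻¹) * (p : ℝ) ^ (-n : ℤ)) • g ((p : ℝ) ^ (-n : ℤ)))
      (∫ y in closedBall 0 1, g ‖y‖ ∂μ) := by
  rw [setIntegral_congr_set closedBall_zero_one_ae_eq_iUnion_sphere]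
  have := hasSum_integral_iUnion (fun _ ↦ isClosed_sphere.measurableSet)
    pairwise_disjoint_sphere_zpow ((integrableOn_congr_set_ae
      closedBall_zero_one_ae_eq_iUnion_sphere).1 (integrableOn_closedBall_comp_norm hμ hg))
  simpa only [setIntegral_sphere_comp_norm, addHaar_real_sphere_zpow hμ] using this

end Radial

theorem integrableOn_closedBall_norm_cpow (hμ : μ (closedBall 0 1) = 1) {s : ℂ}
    (hs : -1 < s.re) : IntegrableOn (fun y : ℚ_[p] ↦ (‖y‖ : ℂ) ^ s) (closedBall 0 1) μ :=
  integrableOn_closedBall_comp_norm (g := fun r : ℝ ↦ (r : ℂ) ^ s) hμ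
    (summable_zpow_neg_mul_norm_cpow hs)

theorem setIntegral_closedBall_norm_cpow (hμ : μ (closedBall 0 1) = 1) {s : ℂ}
    (hs : -1 < s.re) :
    ∫ y in closedBall (0 : ℚ_[p]) 1, (‖y‖ : ℂ) ^ s ∂μ
      = (1 - (p : ℂ)⁻¹) / (1 - (p : ℂ) ^ (-1 - s)) := by
  have hsum := hasSum_setIntegral_closedBall_comp_norm (μ := μ) (g := fun r : ℝ ↦ (r : ℂ) ^ s) hμ
    (summable_zpow_neg_mul_norm_cpow hs)
  simp_rw [mul_smul, zpow_neg_smul_cpow, real_smul] at hsum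
  refine hsum.unique ?_
  rw [div_eq_mul_inv]
  push_cast
  exact (hasSum_geometric_of_norm_lt_one (norm_natCast_cpow_neg_one_sub_lt_one hs)).mul_left _

lemma setIntegral_closedBall_one_zpow_norm_cpow (hμ : μ (closedBall 0 1) = 1) (s : ℂ) :
    ∫ y in closedBall (1 : ℚ_[p]) ((p : ℝ) ^ (-1 : ℤ)), (‖y‖ : ℂ) ^ s ∂μ = (p : ℂ)⁻¹ := by
  have hnorm : Set.EqOn (fun y : ℚ_[p] ↦ (‖y‖ : ℂ) ^ s) (fun _ ↦ 1)
      (closedBall 1 ((p : ℝ) ^ (-1 : ℤ))) := fun y hy ↦ by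
    simp [mem_sphere_zero_iff_norm.1 (closedBall_one_zpow_subset_sphere hy)]
  have hmeas := addHaar_real_closedBall_zpow hμ (1 : ℚ_[p]) 1
  rw [Nat.cast_one] at hmeas
  rw [setIntegral_congr_fun measurableSet_closedBall hnorm, setIntegral_const, hmeas]
  simp

end Padic

/-- Example-2: the local zeta integral of `|1-x|_p^s` over the units `ℤ_p^×`. -/
theorem padic_zeta_integral_units (p : ℕ) [Fact p.Prime]
    [MeasurableSpace ℚ_[p]] [BorelSpace ℚ_[p]]
    (μ : Measure ℚ_[p]) [μ.IsAddHaarMeasure]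
    (hμ : μ {x : ℚ_[p] | ‖x‖ ≤ 1} = 1)
    (s : ℂ) (hs : -1 < s.re) :
    ∫ x in {x : ℚ_[p] | ‖x‖ = 1}, (‖1 - x‖ : ℂ) ^ s ∂μ
      = (p : ℂ) ^ (-1 - s) * (1 - (p : ℂ)⁻¹) / (1 - (p : ℂ) ^ (-1 - s))
        + (p : ℂ)⁻¹ * ((p : ℂ) - 2) := by
  have hball : {x : ℚ_[p] | ‖x‖ ≤ 1} = closedBall 0 1 := by ext; simp
  have hunits : {x : ℚ_[p] | ‖x‖ = 1} = sphere 0 1 := by ext; simp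
  rw [hball] at hμ
  have hp0 : (p : ℂ) ≠ 0 := Nat.cast_ne_zero.2 (Fact.out : p.Prime).ne_zero
  have hq : 1 - (p : ℂ) ^ (-1 - s) ≠ 0 := fun h ↦ by
    simpa [← sub_eq_zero.1 h] using Padic.norm_natCast_cpow_neg_one_sub_lt_one (p := p) hs
  rw [hunits, setIntegral_sphere_zero_sub_left μ (fun y ↦ (‖y‖ : ℂ) ^ s),
    Padic.sphere_one_one_eq_closedBall_sdiff,
    setIntegral_sdiff measurableSet_closedBall (Padic.integrableOn_closedBall_norm_cpow hμ hs)
      (Padic.closedBall_one_zpow_subset_sphere.trans sphere_subset_closedBall),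
    Padic.setIntegral_closedBall_norm_cpow hμ hs,
    Padic.setIntegral_closedBall_one_zpow_norm_cpow hμ]
  field_simp
  ring
end

section
/- Let p be a prime number and let s₁₂, s₃₂ ∈ ℂ with Re(s₁₂) + Re(s₃₂) < -1. Then ∫_{ℚ_p ∖ ℤ_p} |x|_p^{s₁₂} |1 - x|_p^{s₃₂} dμ(x) = (1 - p^{-1})·p^{1+s₁₂+s₃₂}/(1 - p^{1+s₁₂+s₃₂}). -/
/-!
The region `1 < ‖x‖` is the disjoint union of the spheres `‖x‖ = p ^ (n + 1)`, `n ≥ 0`. On such a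
sphere `‖1 - x‖ = ‖x‖`, so the integrand is the constant `(p ^ (s₁₂ + s₃₂)) ^ (n + 1)`, and the
sphere has measure `p ^ (n + 1) - p ^ n`, because the ball of radius `p ^ n` is the disjoint union
of the `p ^ n` translates of `ℤ_p` by `k / p ^ n`, `0 ≤ k < p ^ n`. The integral is then the
geometric series `(1 - p⁻¹) ∑ q ^ (n + 1)` with `q = p ^ (1 + s₁₂ + s₃₂)`, `‖q‖ < 1`.
-/

open MeasureTheory Complex Metric

theorem IsUltrametricDist.norm_sub_eq_right_of_norm_lt {S : Type*} [SeminormedAddGroup S]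
    [IsUltrametricDist S] {a x : S} (h : ‖a‖ < ‖x‖) : ‖a - x‖ = ‖x‖ := by
  rw [sub_eq_add_neg, norm_add_eq_max_of_norm_ne_norm (by rw [norm_neg]; exact h.ne), norm_neg,
    max_eq_right h.le]

theorem MeasureTheory.hasSum_setIntegral_iUnion_of_eqOn_const {X E ι : Type*}
    [MeasurableSpace X] [NormedAddCommGroup E] [NormedSpace ℝ E] [CompleteSpace E] [Countable ι]
    {μ : Measure X} {s : ι → Set X} {f : X → E} {c : ι → E}
    (hs : ∀ i, MeasurableSet (s i)) (hd : Pairwise (Function.onFun Disjoint s))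
    (hμs : ∀ i, μ (s i) ≠ ⊤) (hf : ∀ i, Set.EqOn f (fun _ ↦ c i) (s i))
    (hc : Summable fun i ↦ ‖μ.real (s i) • c i‖) :
    HasSum (fun i ↦ μ.real (s i) • c i) (∫ x in ⋃ i, s i, f x ∂μ) := by
  have hint i : IntegrableOn f (s i) μ :=
    (integrableOn_const (hμs i)).congr_fun (hf i).symm (hs i)
  have hnorm i : ∫ x in s i, ‖f x‖ ∂μ = ‖μ.real (s i) • c i‖ := by
    rw [setIntegral_congr_fun (hs i) fun x hx ↦ congrArg norm (hf i hx), setIntegral_const,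
      norm_smul, Real.norm_of_nonneg measureReal_nonneg, smul_eq_mul]
  have hval i : ∫ x in s i, f x ∂μ = μ.real (s i) • c i := by
    rw [setIntegral_congr_fun (hs i) (hf i), setIntegral_const]
  simpa only [hval] using hasSum_integral_iUnion hs hd
    (integrableOn_iUnion_of_summable_integral_norm hint (by simpa only [hnorm] using hc))

theorem Metric.pairwise_disjoint_sphere {X ι : Type*} [PseudoMetricSpace X] (x : X) {r : ι → ℝ}
    (hr : Function.Injective r) : Pairwise (Function.onFun Disjoint fun i ↦ sphere x (r i)) :=
  fun _ _ hij ↦ Set.disjoint_left.2 fun _ hi hj ↦ hij (hr (hi.symm.trans hj))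

namespace Padic

variable {p : ℕ} [hp : Fact p.Prime]

theorem norm_div_p_pow (x : ℚ_[p]) (n : ℕ) : ‖x / p ^ n‖ = ‖x‖ * p ^ n := by
  rw [norm_div, norm_p_pow, zpow_neg, zpow_natCast, div_inv_eq_mul]

theorem closedBall_zero_p_pow_eq_iUnion (n : ℕ) :
    closedBall (0 : ℚ_[p]) (p ^ n) = ⋃ k : Fin (p ^ n), closedBall ((k : ℚ_[p]) / p ^ n) 1 := by
  have hpn : (0 : ℝ) < (p : ℝ) ^ n := pow_pos (Nat.cast_pos.2 hp.out.pos) n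
  have hp0 : (p : ℚ_[p]) ^ n ≠ 0 := pow_ne_zero _ (Nat.cast_ne_zero.2 hp.out.ne_zero)
  ext x
  simp only [mem_closedBall_iff_norm, sub_zero, Set.mem_iUnion]
  constructor
  · intro hx
    have hy : ‖x * p ^ n‖ ≤ 1 := by
      rw [norm_mul, norm_p_pow, zpow_neg, zpow_natCast, ← div_eq_mul_inv]
      exact div_le_one_of_le₀ hx hpn.le
    set y : ℤ_[p] := ⟨x * p ^ n, hy⟩
    refine ⟨⟨y.appr n, y.appr_lt n⟩, ?_⟩
    have hxy : x - (y.appr n : ℚ_[p]) / p ^ n = ((y - y.appr n : ℤ_[p]) : ℚ_[p]) / p ^ n := by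
      have hy' : (y : ℚ_[p]) = x * p ^ n := rfl
      push_cast
      rw [hy']
      field_simp
    rw [hxy, norm_div_p_pow, ← le_div_iff₀ hpn, one_div, ← zpow_natCast, ← zpow_neg,
      ← PadicInt.norm_def]
    exact (PadicInt.norm_le_pow_iff_mem_span_pow _ n).2 (y.appr_spec n)
  · rintro ⟨k, hk⟩
    have hc : ‖((k : ℕ) : ℚ_[p]) / p ^ n‖ ≤ p ^ n := by
      rw [norm_div_p_pow]
      exact mul_le_of_le_one_left hpn.le (by exact_mod_cast norm_int_le_one (p := p) (k : ℕ))
    calc ‖x‖ = ‖(x - (k : ℚ_[p]) / p ^ n) + (k : ℚ_[p]) / p ^ n‖ := by rw [sub_add_cancel]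
      _ ≤ max ‖x - (k : ℚ_[p]) / p ^ n‖ ‖(k : ℚ_[p]) / p ^ n‖ :=
        IsUltrametricDist.norm_add_le_max _ _
      _ ≤ p ^ n := max_le (hk.trans (one_le_pow₀ (Nat.one_le_cast.2 hp.out.one_le))) hc

theorem pairwise_disjoint_closedBall_natCast_div_p_pow (n : ℕ) :
    Pairwise (Function.onFun Disjoint
      fun k : Fin (p ^ n) ↦ closedBall ((k : ℚ_[p]) / p ^ n) 1) := by
  intro k j hkj
  refine Set.disjoint_left.2 fun x hxk hxj ↦ hkj (Fin.ext ?_)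
  have hdist : ‖(((j : ℕ) - (k : ℕ) : ℤ) : ℚ_[p]) / p ^ n‖ ≤ 1 := by
    rw [mem_closedBall] at hxk hxj
    have := (dist_triangle_max ((k : ℚ_[p]) / p ^ n) x ((j : ℚ_[p]) / p ^ n)).trans
      (max_le (by rwa [dist_comm]) hxj)
    rwa [dist_eq_norm', ← sub_div, ← Int.cast_natCast, ← Int.cast_natCast (R := ℚ_[p]) k,
      ← Int.cast_sub] at this
  rw [norm_div_p_pow, ← le_div_iff₀ (pow_pos (Nat.cast_pos.2 hp.out.pos) n), one_div,
    ← zpow_natCast, ← zpow_neg, norm_int_le_pow_iff_dvd] at hdist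
  exact Nat.ModEq.eq_of_lt_of_lt (Nat.modEq_iff_dvd.2 (by exact_mod_cast hdist)) k.2 j.2

theorem addHaar_closedBall_zero_p_pow [MeasurableSpace ℚ_[p]] [BorelSpace ℚ_[p]]
    (μ : Measure ℚ_[p]) [μ.IsAddHaarMeasure] (n : ℕ) :
    μ (closedBall 0 (p ^ n)) = p ^ n * μ (closedBall 0 1) := by
  rw [closedBall_zero_p_pow_eq_iUnion, measure_iUnion
    (pairwise_disjoint_closedBall_natCast_div_p_pow n) fun _ ↦ measurableSet_closedBall]
  simp [Measure.addHaar_closedBall_center]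

theorem ball_zero_p_pow_succ (n : ℕ) : ball (0 : ℚ_[p]) (p ^ (n + 1)) = closedBall 0 (p ^ n) := by
  ext x
  rw [mem_ball_zero_iff, mem_closedBall_zero_iff, ← zpow_natCast, ← zpow_natCast, Nat.cast_succ,
    norm_le_pow_iff_norm_lt_pow_add_one]

theorem addHaar_real_sphere_zero_p_pow_succ [MeasurableSpace ℚ_[p]] [BorelSpace ℚ_[p]]
    (μ : Measure ℚ_[p]) [μ.IsAddHaarMeasure] (n : ℕ) :
    μ.real (sphere 0 (p ^ (n + 1))) = (1 - (p : ℝ)⁻¹) * p ^ (n + 1) * μ.real (closedBall 0 1) := by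
  have hp0 : (p : ℝ) ≠ 0 := Nat.cast_ne_zero.2 hp.out.ne_zero
  have hball (m : ℕ) : μ.real (closedBall 0 (p ^ m)) = p ^ m * μ.real (closedBall 0 1) := by
    simp [measureReal_def, addHaar_closedBall_zero_p_pow]
  rw [← closedBall_sdiff_ball, measureReal_sdiff ball_subset_closedBall measurableSet_ball
    measure_closedBall_lt_top.ne, ball_zero_p_pow_succ, hball, hball]
  field_simp
  ring

theorem setOf_one_lt_norm_eq_iUnion_sphere :
    {x : ℚ_[p] | 1 < ‖x‖} = ⋃ n : ℕ, sphere 0 (p ^ (n + 1)) := by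
  have hp1 : (1 : ℝ) < p := Nat.one_lt_cast.2 hp.out.one_lt
  ext x
  simp only [Set.mem_ofPred_eq, Set.mem_iUnion, mem_sphere_zero_iff_norm]
  constructor
  · intro hx
    have hx0 : x ≠ 0 := norm_pos_iff.1 (one_pos.trans hx)
    rw [norm_eq_zpow_neg_valuation hx0] at hx ⊢
    rw [one_lt_zpow_iff_right₀ hp1] at hx
    refine ⟨(-x.valuation - 1).toNat, ?_⟩
    rw [← zpow_natCast]
    congr 1
    omega
  · rintro ⟨n, hn⟩
    exact hn ▸ one_lt_pow₀ hp1 n.succ_ne_zero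

theorem norm_cpow_mul_norm_one_sub_cpow_of_mem_sphere {n : ℕ} {x : ℚ_[p]}
    (hx : x ∈ sphere 0 (p ^ (n + 1))) (a b : ℂ) :
    (‖x‖ : ℂ) ^ a * (‖1 - x‖ : ℂ) ^ b = ((p : ℂ) ^ (a + b)) ^ (n + 1) := by
  rw [mem_sphere_zero_iff_norm] at hx
  have h1 : ‖(1 : ℚ_[p])‖ < ‖x‖ :=
    hx ▸ norm_one (α := ℚ_[p]) ▸ one_lt_pow₀ (Nat.one_lt_cast.2 hp.out.one_lt) n.succ_ne_zero
  have hpn : (p : ℂ) ^ (n + 1) ≠ 0 := pow_ne_zero _ (Nat.cast_ne_zero.2 hp.out.ne_zero)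
  rw [IsUltrametricDist.norm_sub_eq_right_of_norm_lt h1, hx]
  push_cast
  rw [← cpow_add _ _ hpn, ← natCast_cpow_natCast_mul, cpow_nat_mul]

end Padic

/-- The sector `Sect(∅)` contribution to the 4-point zeta function,
an integral over `ℚ_p ∖ ℤ_p`. -/
theorem padic_four_point_sector_empty (p : ℕ) [Fact p.Prime]
    [MeasurableSpace ℚ_[p]] [BorelSpace ℚ_[p]]
    (μ : Measure ℚ_[p]) [μ.IsAddHaarMeasure]
    (hμ : μ {x : ℚ_[p] | ‖x‖ ≤ 1} = 1)
    (s₁₂ s₃₂ : ℂ) (h : s₁₂.re + s₃₂.re < -1) :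
    ∫ x in {x : ℚ_[p] | 1 < ‖x‖}, (‖x‖ : ℂ) ^ s₁₂ * (‖1 - x‖ : ℂ) ^ s₃₂ ∂μ
      = (1 - (p : ℂ)⁻¹) * (p : ℂ) ^ (1 + s₁₂ + s₃₂) / (1 - (p : ℂ) ^ (1 + s₁₂ + s₃₂)) := by
  have hp : 1 < p := (Fact.out : p.Prime).one_lt
  set q := (p : ℂ) ^ (1 + s₁₂ + s₃₂) with hq_def
  have hq : ‖q‖ < 1 := by
    rw [norm_natCast_cpow_of_pos (by omega)]
    refine Real.rpow_lt_one_of_one_lt_of_neg (Nat.one_lt_cast.2 hp) ?_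
    simp only [add_re, one_re]
    linarith
  have hμ' : μ.real (closedBall 0 1) = 1 := by
    have hball : closedBall (0 : ℚ_[p]) 1 = {x | ‖x‖ ≤ 1} := by ext; simp
    rw [measureReal_def, hball, hμ, ENNReal.toReal_one]
  have hterm (n : ℕ) : μ.real (sphere 0 (p ^ (n + 1))) • ((p : ℂ) ^ (s₁₂ + s₃₂)) ^ (n + 1) =
      (1 - (p : ℂ)⁻¹) * q ^ (n + 1) := by
    rw [Padic.addHaar_real_sphere_zero_p_pow_succ, hμ', real_smul, hq_def, add_assoc,
      cpow_add 1 _ (by exact_mod_cast (by omega : p ≠ 0)), cpow_one]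
    push_cast
    ring
  rw [Padic.setOf_one_lt_norm_eq_iUnion_sphere]
  refine (hasSum_setIntegral_iUnion_of_eqOn_const (fun _ ↦ isClosed_sphere.measurableSet)
    (pairwise_disjoint_sphere 0 ?_) (fun _ ↦ (isCompact_sphere 0 _).measure_lt_top.ne)
    (fun _ _ hx ↦ Padic.norm_cpow_mul_norm_one_sub_cpow_of_mem_sphere hx s₁₂ s₃₂) ?_).unique ?_
  · exact (pow_right_injective₀ (by positivity) (by exact_mod_cast hp.ne')).comp Nat.succ_injective
  · simp only [hterm]
    simpa only [norm_mul, norm_pow, pow_succ', mul_assoc] using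
      (summable_geometric_of_lt_one (norm_nonneg q) hq).mul_left (‖1 - (p : ℂ)⁻¹‖ * ‖q‖)
  · simp only [hterm]
    simpa only [pow_succ', mul_assoc, div_eq_mul_inv] using
      (hasSum_geometric_of_norm_lt_one hq).mul_left ((1 - (p : ℂ)⁻¹) * q)
end

section
/- Let p be a prime number, let N ≥ 4 be an integer, and let nonnegative real exponents a_{1j}, a_{(N-1)j} for 2 ≤ j ≤ N-2 and a_{ij} for 2 ≤ i < j ≤ N-2 be given. Then the integral over ℚ_p^{N-3} (with respect to the product Haar measure) of the nonnegative function (x₂,…,x_{N-2}) ↦ ∏_{j=2}^{N-2} |x_j|_p^{a_{1j}} |1-x_j|_p^{a_{(N-1)j}} · ∏_{2≤i<j≤N-2} |x_i - x_j|_p^{a_{ij}} diverges to +∞; that is, this function is not integrable on ℚ_p^{N-3}. -/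
/-!
On the region where all `‖x j‖` exceed `1` and are pairwise distinct, the ultrametric
inequality gives `‖1 - x j‖ = ‖x j‖` and `‖x i - x j‖ = max ‖x i‖ ‖x j‖`, so every factor of the
integrand is a nonnegative power of a number `≥ 1` and the integrand is `≥ 1`. This region has
infinite Haar measure: it contains the disjoint unit polydiscs around countably many centres whose
coordinates all have pairwise distinct norms `> 1`, and all these polydiscs have the same positive
measure.
-/

open MeasureTheory Finset

lemma lintegral_ofReal_eq_top_of_one_le {α : Type*} [MeasurableSpace α] {μ : Measure α}
    {f : α → ℝ} {s : Set α} (hs : MeasurableSet s) (hμs : μ s = ⊤) (hf : ∀ x ∈ s, 1 ≤ f x) :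
    ∫⁻ x, ENNReal.ofReal (f x) ∂μ = ⊤ :=
  top_unique <| calc
    ⊤ = ∫⁻ x, s.indicator 1 x ∂μ := by rw [lintegral_indicator_one hs, hμs]
    _ ≤ ∫⁻ x, ENNReal.ofReal (f x) ∂μ := lintegral_mono fun x => by
        by_cases hx : x ∈ s
        · simpa [hx] using hf x hx
        · simp [hx]

namespace IsUltrametricDist

variable {E : Type*} [SeminormedAddCommGroup E] [IsUltrametricDist E] {x y : E}

lemma norm_sub_eq_max_of_norm_ne_norm (h : ‖x‖ ≠ ‖y‖) : ‖x - y‖ = max ‖x‖ ‖y‖ := by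
  simpa [sub_eq_add_neg] using norm_add_eq_max_of_norm_ne_norm (y := -y) (by simpa using h)

lemma norm_eq_of_mem_ball {r : ℝ} (hx : x ∈ Metric.ball y r) (hr : r ≤ ‖y‖) : ‖x‖ = ‖y‖ := by
  have hlt : ‖x - y‖ < ‖y‖ := (mem_ball_iff_norm.mp hx).trans_le hr
  simpa [max_eq_right hlt.le] using norm_add_eq_max_of_norm_ne_norm hlt.ne

end IsUltrametricDist

open IsUltrametricDist

lemma NormedField.exists_one_lt_norm_injective (K α : Type*) [NontriviallyNormedField K]
    [Countable α] : ∃ c : α → K, (∀ a, 1 < ‖c a‖) ∧ Function.Injective (‖c ·‖) := by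
  obtain ⟨ϖ, hϖ⟩ := NormedField.exists_one_lt_norm K
  obtain ⟨f, hf⟩ := Countable.exists_injective_nat α
  refine ⟨fun a => ϖ ^ (f a + 1), fun a => ?_, fun a b hab => hf ?_⟩
  · simpa using one_lt_pow₀ hϖ (Nat.succ_ne_zero _)
  · exact Nat.succ_injective <| pow_right_injective₀ (zero_lt_one.trans hϖ) hϖ.ne' <| by
      simpa only [norm_pow] using hab

noncomputable def kobaNielsen {K ι : Type*} [NormedField K] [Fintype ι] [LinearOrder ι]
    (a₁ aN₁ : ι → ℝ) (a : ι → ι → ℝ) (x : ι → K) : ℝ :=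
  (∏ j, ‖x j‖ ^ a₁ j * ‖1 - x j‖ ^ aN₁ j) *
    ∏ j, ∏ i ∈ Finset.univ.filter (fun i => i < j), ‖x i - x j‖ ^ a i j

def distinctLargeNorms (E ι : Type*) [Norm E] : Set (ι → E) :=
  {x | (∀ j, 1 < ‖x j‖) ∧ Pairwise fun i j => ‖x i‖ ≠ ‖x j‖}

lemma one_le_kobaNielsen {K ι : Type*} [NormedField K] [IsUltrametricDist K] [Fintype ι]
    [LinearOrder ι] {a₁ aN₁ : ι → ℝ} {a : ι → ι → ℝ} (ha₁ : ∀ j, 0 ≤ a₁ j)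
    (haN₁ : ∀ j, 0 ≤ aN₁ j) (ha : ∀ i j, i < j → 0 ≤ a i j) {x : ι → K}
    (hx : x ∈ distinctLargeNorms K ι) :
    1 ≤ kobaNielsen a₁ aN₁ a x := by
  obtain ⟨hx_large, hx_distinct⟩ := hx
  have h_one_sub : ∀ j, 1 ≤ ‖1 - x j‖ := fun j => by
    rw [norm_sub_eq_max_of_norm_ne_norm (by simpa using (hx_large j).ne), norm_one]
    exact le_max_left _ _
  have h_sub : ∀ i j, i ≠ j → 1 ≤ ‖x i - x j‖ := fun i j hij => by
    rw [norm_sub_eq_max_of_norm_ne_norm (hx_distinct hij)]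
    exact (hx_large i).le.trans (le_max_left _ _)
  refine one_le_mul_of_one_le_of_one_le (one_le_prod fun j _ => ?_)
    (one_le_prod fun j _ => one_le_prod fun i hi => ?_)
  · exact one_le_mul_of_one_le_of_one_le (Real.one_le_rpow (hx_large j).le (ha₁ j))
      (Real.one_le_rpow (h_one_sub j) (haN₁ j))
  · have hij : i < j := (mem_filter.mp hi).2
    exact Real.one_le_rpow (h_sub i j hij.ne) (ha i j hij)

lemma measurableSet_distinctLargeNorms {E ι : Type*} [SeminormedAddGroup E] [MeasurableSpace E]
    [OpensMeasurableSpace E] [Countable ι] : MeasurableSet (distinctLargeNorms E ι) := by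
  simp only [distinctLargeNorms, Set.ofPred_and, Set.ofPred_forall, Pairwise]
  exact (MeasurableSet.iInter fun j => measurableSet_lt measurable_const (by fun_prop)).inter
    (MeasurableSet.iInter fun i => MeasurableSet.iInter fun j => MeasurableSet.iInter fun _ =>
      (measurableSet_eq_fun (by fun_prop) (by fun_prop)).compl)

lemma measure_pi_distinctLargeNorms_eq_top {K ι : Type*} [NontriviallyNormedField K]
    [IsUltrametricDist K] [MeasurableSpace K] [BorelSpace K] [Fintype ι] [Nonempty ι]
    (μ : Measure K) [μ.IsAddHaarMeasure] [SigmaFinite μ] :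
    Measure.pi (fun _ : ι => μ) (distinctLargeNorms K ι) = ⊤ := by
  obtain ⟨c, hc_large, hc_inj⟩ := NormedField.exists_one_lt_norm_injective K (ℕ × ι)
  set B : ℕ → Set (ι → K) := fun k => Set.univ.pi fun j => Metric.ball (c (k, j)) 1
  have hB_norm : ∀ k, ∀ x ∈ B k, ∀ j, ‖x j‖ = ‖c (k, j)‖ := fun k x hx j =>
    norm_eq_of_mem_ball (hx j (Set.mem_univ j)) (hc_large _).le
  have hB_sub : ∀ k, B k ⊆ distinctLargeNorms K ι := fun k x hx =>
    ⟨fun j => hB_norm k x hx j ▸ hc_large _, fun i j hij h => hij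
      (congrArg Prod.snd (hc_inj (by simpa [hB_norm k x hx] using h)))⟩
  have hB_disj : Pairwise (Function.onFun Disjoint B) := fun k k' hkk' =>
    Set.disjoint_left.mpr fun x hx hx' => by
      obtain ⟨j⟩ := ‹Nonempty ι›
      exact hkk' (congrArg Prod.fst (hc_inj ((hB_norm k x hx j).symm.trans (hB_norm k' x hx' j))))
  have hB_measure : ∀ k,
      Measure.pi (fun _ : ι => μ) (B k) = μ (Metric.ball 0 1) ^ Fintype.card ι := fun k => by
    simp [B, Measure.pi_pi, Measure.addHaar_ball_center]
  have hball : μ (Metric.ball 0 1) ^ Fintype.card ι ≠ 0 :=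
    pow_ne_zero _ (Metric.measure_ball_pos μ 0 one_pos).ne'
  refine top_unique ?_
  calc ⊤ = ∑' k, Measure.pi (fun _ : ι => μ) (B k) := by
        simp only [hB_measure, ENNReal.tsum_const_eq_top_of_ne_zero hball]
    _ = Measure.pi (fun _ : ι => μ) (⋃ k, B k) :=
        (measure_iUnion hB_disj fun k => MeasurableSet.univ_pi fun _ => measurableSet_ball).symm
    _ ≤ _ := measure_mono (Set.iUnion_subset hB_sub)

theorem padic_N_point_divergence_general (p : ℕ) [Fact p.Prime]
    [MeasurableSpace ℚ_[p]] [BorelSpace ℚ_[p]]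
    (μ : Measure ℚ_[p]) [μ.IsAddHaarMeasure]
    (N : ℕ) (hN : 4 ≤ N)
    (a₁ aN₁ : Fin (N - 3) → ℝ) (a : Fin (N - 3) → Fin (N - 3) → ℝ)
    (ha₁ : ∀ j, 0 ≤ a₁ j) (haN₁ : ∀ j, 0 ≤ aN₁ j)
    (ha : ∀ i j : Fin (N - 3), i < j → 0 ≤ a i j) :
    (∫⁻ x : Fin (N - 3) → ℚ_[p],
        ENNReal.ofReal
          ((∏ j, ‖x j‖ ^ a₁ j * ‖1 - x j‖ ^ aN₁ j) *
            ∏ j, ∏ i ∈ Finset.univ.filter (fun i => i < j), ‖x i - x j‖ ^ a i j)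
        ∂(Measure.pi fun _ => μ)) = ⊤ ∧
    ¬ Integrable (fun x : Fin (N - 3) → ℚ_[p] =>
        (∏ j, ‖x j‖ ^ a₁ j * ‖1 - x j‖ ^ aN₁ j) *
          ∏ j, ∏ i ∈ Finset.univ.filter (fun i => i < j), ‖x i - x j‖ ^ a i j)
      (Measure.pi fun _ => μ) := by
  have : Nonempty (Fin (N - 3)) := ⟨⟨0, by omega⟩⟩
  have h_top : ∫⁻ x, ENNReal.ofReal (kobaNielsen a₁ aN₁ a x) ∂(Measure.pi fun _ => μ) = ⊤ :=
    lintegral_ofReal_eq_top_of_one_le measurableSet_distinctLargeNorms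
      (measure_pi_distinctLargeNorms_eq_top μ) fun x hx => one_le_kobaNielsen ha₁ haN₁ ha hx
  exact ⟨h_top, fun h_int => h_int.lintegral_lt_top.ne h_top⟩

/-- If all the exponents `Re(s_{ij}) = a_{ij}` are nonnegative, then the `p`-adic
open string `N`-point zeta integral diverges to `+∞`; in particular the integrand
is not integrable on `ℚ_p^{N-3}`. -/
theorem padic_N_point_divergence (p : ℕ) [Fact p.Prime]
    [MeasurableSpace ℚ_[p]] [BorelSpace ℚ_[p]]
    (μ : Measure ℚ_[p]) [μ.IsAddHaarMeasure]
    (hμ : μ {x : ℚ_[p] | ‖x‖ ≤ 1} = 1)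
    (N : ℕ) (hN : 4 ≤ N)
    (a₁ aN₁ : Fin (N - 3) → ℝ) (a : Fin (N - 3) → Fin (N - 3) → ℝ)
    (ha₁ : ∀ j, 0 ≤ a₁ j) (haN₁ : ∀ j, 0 ≤ aN₁ j)
    (ha : ∀ i j : Fin (N - 3), i < j → 0 ≤ a i j) :
    (∫⁻ x : Fin (N - 3) → ℚ_[p],
        ENNReal.ofReal
          ((∏ j, ‖x j‖ ^ a₁ j * ‖1 - x j‖ ^ aN₁ j) *
            ∏ j, ∏ i ∈ Finset.univ.filter (fun i => i < j), ‖x i - x j‖ ^ a i j)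
        ∂(Measure.pi fun _ => μ)) = ⊤ ∧
    ¬ Integrable (fun x : Fin (N - 3) → ℚ_[p] =>
        (∏ j, ‖x j‖ ^ a₁ j * ‖1 - x j‖ ^ aN₁ j) *
          ∏ j, ∏ i ∈ Finset.univ.filter (fun i => i < j), ‖x i - x j‖ ^ a i j)
      (Measure.pi fun _ => μ) :=
  padic_N_point_divergence_general p μ N hN a₁ aN₁ a ha₁ haN₁ ha
end
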